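/- If A is an n×n integer matrix with det(A) = d ≠ 0, then for every point z in (ℂ*)^n, the fiber Φ_A^{-1}(z) of the associated monomial map has exactly |d| elements. -/

import Mathlib

/-!
Writing points of the torus as `exp (2πi t)`, the monomial map becomes linear:
`Φ_A (exp (2πi t)) = exp (2πi A t)`. Since `A` is invertible over `ℂ`, `Φ_A` is a surjective
group homomorphism, so every fiber is a coset of its kernel, and `v ↦ exp (2πi A⁻¹ v)` maps `ℤⁿ`
onto that kernel with kernel `A ℤⁿ`. By the Smith normal form, `A ℤⁿ` has index `|det A|` in `ℤⁿ`.
-/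

/-- The monomial map on the torus `(ℂ*)^n` associated to an integer matrix `A`. -/
def monomialMap {n : ℕ} (A : Matrix (Fin n) (Fin n) ℤ) (x : Fin n → ℂˣ) : Fin n → ℂˣ :=
  fun i => ∏ j, (x j) ^ (A i j)

open Complex Matrix
open scoped Real

noncomputable section

theorem Matrix.index_range_mulVecLin {ι : Type*} [Fintype ι] [DecidableEq ι]
    (A : Matrix ι ι ℤ) (hA : A.det ≠ 0) :
    (LinearMap.range A.mulVecLin).toAddSubgroup.index = A.det.natAbs := by
  let e := LinearEquiv.ofInjective A.mulVecLin (mulVec_injective_of_det_ne_zero hA)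
  change Nat.card ((ι → ℤ) ⧸ LinearMap.range A.mulVecLin) = _
  rw [← Submodule.natAbs_det_equiv _ e, ← LinearMap.det_toLin']
  rfl

theorem Matrix.inv_mulVec_eq_iff {ι R : Type*} [Fintype ι] [DecidableEq ι] [CommRing R]
    {B : Matrix ι ι R} (hB : IsUnit B.det) {x y : ι → R} : B⁻¹ *ᵥ x = y ↔ x = B *ᵥ y := by
  constructor
  · rintro rfl
    rw [mulVec_mulVec, mul_nonsing_inv _ hB, one_mulVec]
  · rintro rfl
    rw [mulVec_mulVec, nonsing_inv_mul _ hB, one_mulVec]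

theorem Matrix.map_intCast_mulVec {ι R : Type*} [Fintype ι] [Ring R] (A : Matrix ι ι ℤ)
    (v : ι → ℤ) : A.map (Int.cast : ℤ → R) *ᵥ (Int.cast ∘ v) = Int.cast ∘ (A *ᵥ v) := by
  ext i
  exact ((Int.castRingHom R).map_mulVec A v i).symm

def unitExp (t : ℂ) : ℂˣ := Units.mk0 (exp (2 * π * I * t)) (exp_ne_zero _)

@[simp] lemma val_unitExp (t : ℂ) : (unitExp t : ℂ) = exp (2 * π * I * t) := rfl

lemma unitExp_add (s t : ℂ) : unitExp (s + t) = unitExp s * unitExp t := by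
  ext; simp [mul_add, exp_add]

lemma unitExp_sum {ι : Type*} (s : Finset ι) (f : ι → ℂ) :
    unitExp (∑ i ∈ s, f i) = ∏ i ∈ s, unitExp (f i) := by
  ext; simp [Finset.mul_sum, exp_sum]

lemma unitExp_zpow (t : ℂ) (k : ℤ) : unitExp t ^ k = unitExp (k * t) := by
  ext; simp [← exp_int_mul, mul_left_comm]

lemma unitExp_eq_one_iff {t : ℂ} : unitExp t = 1 ↔ ∃ k : ℤ, t = k := by
  simp only [Units.ext_iff, val_unitExp, Units.val_one, exp_eq_one_iff]
  refine exists_congr fun k => ?_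
  rw [mul_comm (k : ℂ), mul_right_inj' two_pi_I_ne_zero]

lemma unitExp_surjective : Function.Surjective unitExp := by
  intro u
  obtain ⟨w, hw⟩ : (u : ℂ) ∈ Set.range exp := by simp [range_exp]
  refine ⟨w / (2 * π * I), Units.ext ?_⟩
  simp [mul_div_cancel₀ _ two_pi_I_ne_zero, hw]

lemma comp_unitExp_eq_one_iff {ι : Type*} {t : ι → ℂ} :
    unitExp ∘ t = 1 ↔ ∃ k : ι → ℤ, t = Int.cast ∘ k := by
  simp only [funext_iff, Function.comp_apply, Pi.one_apply, unitExp_eq_one_iff]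
  exact Classical.skolem

variable {n : ℕ}

def monomialMapHom (A : Matrix (Fin n) (Fin n) ℤ) : (Fin n → ℂˣ) →* (Fin n → ℂˣ) where
  toFun := monomialMap A
  map_one' := by ext; simp [monomialMap]
  map_mul' x y := by ext; simp [monomialMap, mul_zpow, Finset.prod_mul_distrib]

@[simp] lemma coe_monomialMapHom (A : Matrix (Fin n) (Fin n) ℤ) :
    ⇑(monomialMapHom A) = monomialMap A := rfl

lemma monomialMap_comp_unitExp (A : Matrix (Fin n) (Fin n) ℤ) (t : Fin n → ℂ) :
    monomialMap A (unitExp ∘ t) = unitExp ∘ (A.map (Int.cast : ℤ → ℂ) *ᵥ t) := by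
  ext1 i
  simp only [monomialMap, Function.comp_apply, unitExp_zpow, mulVec, dotProduct, map_apply]
  rw [unitExp_sum]

section

variable {A : Matrix (Fin n) (Fin n) ℤ} (hA : A.det ≠ 0)
include hA

lemma isUnit_det_map_intCast : IsUnit (A.map (Int.cast : ℤ → ℂ)).det := by
  rw [isUnit_iff_ne_zero, ← Int.cast_det]
  exact_mod_cast hA

lemma monomialMap_comp_unitExp_inv_mulVec (c : Fin n → ℂ) :
    monomialMap A (unitExp ∘ ((A.map (Int.cast : ℤ → ℂ))⁻¹ *ᵥ c)) = unitExp ∘ c := by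
  rw [monomialMap_comp_unitExp, ← (inv_mulVec_eq_iff (isUnit_det_map_intCast hA)).mp rfl]

lemma monomialMap_surjective : Function.Surjective (monomialMap A) := by
  intro z
  obtain ⟨c, rfl⟩ := unitExp_surjective.comp_left z
  exact ⟨_, monomialMap_comp_unitExp_inv_mulVec hA c⟩

def latticeToKer : (Fin n → ℤ) →+ Additive (monomialMapHom A).ker :=
  AddMonoidHom.mk'
    (fun v => Additive.ofMul ⟨unitExp ∘ ((A.map (Int.cast : ℤ → ℂ))⁻¹ *ᵥ (Int.cast ∘ v)), by
      rw [MonoidHom.mem_ker, coe_monomialMapHom, monomialMap_comp_unitExp_inv_mulVec hA,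
        comp_unitExp_eq_one_iff]
      exact ⟨v, rfl⟩⟩)
    (fun v w => by
      apply Additive.toMul.injective
      ext1
      funext i
      have hcast : (Int.cast ∘ (v + w) : Fin n → ℂ) = Int.cast ∘ v + Int.cast ∘ w := by
        ext; simp
      simp only [toMul_ofMul, toMul_add, Subgroup.coe_mul, Pi.mul_apply, Function.comp_apply,
        hcast, mulVec_add, Pi.add_apply, unitExp_add])

lemma latticeToKer_surjective : Function.Surjective (latticeToKer hA) := by
  intro x
  obtain ⟨t, ht : unitExp ∘ t = _⟩ := unitExp_surjective.comp_left (x.toMul : Fin n → ℂˣ)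
  have hker : monomialMap A (unitExp ∘ t) = 1 := ht ▸ x.toMul.2
  rw [monomialMap_comp_unitExp, comp_unitExp_eq_one_iff] at hker
  obtain ⟨v, hv⟩ := hker
  refine ⟨v, Additive.toMul.injective (Subtype.ext ?_)⟩
  change unitExp ∘ ((A.map (Int.cast : ℤ → ℂ))⁻¹ *ᵥ (Int.cast ∘ v)) = _
  rw [(inv_mulVec_eq_iff (isUnit_det_map_intCast hA)).mpr hv.symm, ht]

lemma ker_latticeToKer :
    (latticeToKer hA).ker = (LinearMap.range A.mulVecLin).toAddSubgroup := by
  ext v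
  rw [AddMonoidHom.mem_ker, Submodule.mem_toAddSubgroup, LinearMap.mem_range, ← toMul_eq_one,
    ← OneMemClass.coe_eq_one]
  change unitExp ∘ ((A.map (Int.cast : ℤ → ℂ))⁻¹ *ᵥ (Int.cast ∘ v)) = 1 ↔ _
  simp only [comp_unitExp_eq_one_iff, inv_mulVec_eq_iff (isUnit_det_map_intCast hA),
    map_intCast_mulVec, mulVecLin_apply]
  exact exists_congr fun k => Int.cast_injective.comp_left.eq_iff.trans eq_comm

lemma natCard_ker_monomialMapHom : Nat.card (monomialMapHom A).ker = A.det.natAbs := by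
  calc Nat.card (monomialMapHom A).ker
      = Nat.card ((Fin n → ℤ) ⧸ (latticeToKer hA).ker) :=
        Nat.card_congr (QuotientAddGroup.quotientKerEquivOfSurjective _
          (latticeToKer_surjective hA)).toEquiv.symm
    _ = A.det.natAbs := by
        rw [← AddSubgroup.index, ker_latticeToKer, index_range_mulVecLin A hA]

end

end

theorem monomialMap_fiber_card {n : ℕ} (A : Matrix (Fin n) (Fin n) ℤ) (d : ℤ)
    (hd : A.det = d) (hd0 : d ≠ 0) (z : Fin n → ℂˣ) :
    Nat.card {x : Fin n → ℂˣ // monomialMap A x = z} = d.natAbs := by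
  subst hd
  rw [← natCard_ker_monomialMapHom hd0]
  exact Nat.card_congr
    (MonoidHom.fiberEquivKerOfSurjective (f := monomialMapHom A) (monomialMap_surjective hd0) z)
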